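/- Let γ > 0 and let f : ℝ → ℝ be continuous, compactly supported, and nonnegative. Define E(f,γ) = {(x,y) ∈ ℝ² : x ≠ y and |∫_y^x f| ≥ |x-y|^{γ+1}}. Then ∬_{E(f,γ)} |x-y|^{γ-1} dx dy ≤ C · (5^γ/γ) · ∫_ℝ f, where C is a universal constant independent of γ and f. -/

import Mathlib

/-!
If `(x, y) ∈ E(f, γ)`, the interval between `x` and `y`, of length `d`, carries mass
`∫ |f| ≥ d ^ (γ + 1)`; in particular `d` is bounded, so the Vitali covering lemma selects
pairwise disjoint such intervals whose fivefold enlargements `J` cover all of them, and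
`E(f, γ) ⊆ ⋃ J × J`. On a square, `∬_{J × J} |x - y| ^ (γ - 1) ≤ 2 |J| ^ (γ + 1) / γ`, which is
`2 · 5 ^ (γ + 1) / γ` times `d ^ (γ + 1)`, hence times the mass of the selected interval, and
disjointness bounds the total mass by `∫ |f|`.
-/

open MeasureTheory Set Metric
open scoped ENNReal

variable {γ : ℝ}

lemma setLIntegral_Icc_rpow_sub_one (hγ : 0 < γ) {L : ℝ} (hL : 0 ≤ L) :
    ∫⁻ s in Icc 0 L, ENNReal.ofReal (s ^ (γ - 1)) = ENNReal.ofReal (L ^ γ / γ) := by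
  have hγ1 : -1 < γ - 1 := by linarith
  rw [← setLIntegral_congr Ioc_ae_eq_Icc, ← ofReal_integral_eq_lintegral_ofReal
    (intervalIntegral.intervalIntegrable_rpow' hγ1).1
    ((ae_restrict_iff' measurableSet_Ioc).2 (.of_forall fun s hs => Real.rpow_nonneg hs.1.le _)),
    ← intervalIntegral.integral_of_le hL, integral_rpow (Or.inl hγ1), sub_add_cancel,
    Real.zero_rpow hγ.ne', sub_zero]

lemma setLIntegral_Icc_rpow_abs_sub_le (hγ : 0 < γ) (x : ℝ) {L : ℝ} (hL : 0 ≤ L) :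
    ∫⁻ y in Icc (x - L) (x + L), ENNReal.ofReal (|x - y| ^ (γ - 1))
      ≤ 2 * ENNReal.ofReal (L ^ γ / γ) := by
  set h : ℝ → ℝ≥0∞ := (Icc 0 L).indicator fun s => ENNReal.ofReal (s ^ (γ - 1))
  have hh : Measurable h :=
    (measurable_id.pow_const _).ennreal_ofReal.indicator measurableSet_Icc
  -- split `[x - L, x + L]` at `x` and reflect the left half
  have hsplit : ∀ y, (Icc (x - L) (x + L)).indicator
      (fun y => ENNReal.ofReal (|x - y| ^ (γ - 1))) y ≤ h (x - y) + h (y - x) := by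
    intro y
    dsimp only [h]
    by_cases hy : y ∈ Icc (x - L) (x + L)
    · rw [indicator_of_mem hy]
      rcases le_total y x with hyx | hxy
      · refine le_add_right (le_of_eq ?_)
        rw [indicator_of_mem (show x - y ∈ Icc 0 L from ⟨by linarith, by linarith [hy.1]⟩),
          abs_of_nonneg (by linarith)]
      · refine le_add_left (le_of_eq ?_)
        rw [indicator_of_mem (show y - x ∈ Icc 0 L from ⟨by linarith, by linarith [hy.2]⟩),
          abs_of_nonpos (by linarith), neg_sub]
    · simp [indicator_of_notMem hy]
  calc ∫⁻ y in Icc (x - L) (x + L), ENNReal.ofReal (|x - y| ^ (γ - 1))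
      ≤ ∫⁻ y, h (x - y) + h (y - x) := by
        rw [← lintegral_indicator measurableSet_Icc]
        exact lintegral_mono hsplit
    _ = 2 * ENNReal.ofReal (L ^ γ / γ) := by
        rw [lintegral_add_left (f := fun y => h (x - y)) (hh.comp (measurable_const_sub x)),
          lintegral_sub_left_eq_self, lintegral_sub_right_eq_self,
          lintegral_indicator measurableSet_Icc, setLIntegral_Icc_rpow_sub_one hγ hL, two_mul]

lemma setLIntegral_closedBall_prod_rpow_abs_sub_le (hγ : 0 < γ) (c : ℝ) {ρ : ℝ} (hρ : 0 ≤ ρ) :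
    ∫⁻ q in closedBall c ρ ×ˢ closedBall c ρ, ENNReal.ofReal (|q.1 - q.2| ^ (γ - 1))
      ≤ ENNReal.ofReal (2 * (2 * ρ) ^ (γ + 1) / γ) := by
  have hmeas : Measurable fun q : ℝ × ℝ => ENNReal.ofReal (|q.1 - q.2| ^ (γ - 1)) := by
    fun_prop
  rw [Measure.volume_eq_prod, ← Measure.prod_restrict, lintegral_prod _ hmeas.aemeasurable]
  calc ∫⁻ x in closedBall c ρ, ∫⁻ y in closedBall c ρ, ENNReal.ofReal (|x - y| ^ (γ - 1))
      ≤ ∫⁻ _ in closedBall c ρ, 2 * ENNReal.ofReal ((2 * ρ) ^ γ / γ) := by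
        refine setLIntegral_mono' measurableSet_closedBall fun x hx => ?_
        refine (lintegral_mono_set fun y hy => ?_).trans
          (setLIntegral_Icc_rpow_abs_sub_le hγ x (by positivity))
        rw [mem_closedBall, Real.dist_eq, abs_le] at hx hy
        constructor <;> linarith
    _ = ENNReal.ofReal (2 * (2 * ρ) ^ (γ + 1) / γ) := by
        rw [setLIntegral_const, Real.volume_closedBall, ← ENNReal.ofReal_ofNat 2,
          ← ENNReal.ofReal_mul (by norm_num), ← ENNReal.ofReal_mul (by positivity),
          Real.rpow_add_one' (by positivity) (by linarith)]
        ring_nf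

lemma Real.uIcc_eq_closedBall (a b : ℝ) : uIcc a b = closedBall ((a + b) / 2) (|a - b| / 2) := by
  rw [uIcc, Real.Icc_eq_closedBall, min_add_max, max_sub_min_eq_abs, abs_sub_comm]

lemma exists_disjoint_subfamily_covering_enlargement_uIcc (t : Set (ℝ × ℝ))
    (ht : ∀ q ∈ t, q.1 ≠ q.2) {R : ℝ} (hR : ∀ q ∈ t, |q.1 - q.2| ≤ R) :
    ∃ u ⊆ t, u.Countable ∧ u.PairwiseDisjoint (fun q => uIcc q.1 q.2) ∧
      ∀ q ∈ t, ∃ b ∈ u, uIcc q.1 q.2 ⊆ closedBall ((b.1 + b.2) / 2) (5 * (|b.1 - b.2| / 2)) := by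
  simp only [Real.uIcc_eq_closedBall]
  obtain ⟨u, hut, hdisj, hcover⟩ := Vitali.exists_disjoint_subfamily_covering_enlargement_closedBall
    t (fun q => (q.1 + q.2) / 2) (fun q => |q.1 - q.2| / 2) (R / 2)
    (fun q hq => by linarith [hR q hq]) 5 (by norm_num)
  refine ⟨u, hut, hdisj.countable_of_nonempty_interior fun q hq => ?_, hdisj, hcover⟩
  rw [← Real.uIcc_eq_closedBall, uIcc, interior_Icc]
  exact nonempty_Ioo.2 (min_lt_max.2 (ht q (hut hq)))

/-- The set `E(f, γ)`. -/
def exceptionalSet (f : ℝ → ℝ) (γ : ℝ) : Set (ℝ × ℝ) :=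
  {q | q.1 ≠ q.2 ∧ |∫ t in q.2..q.1, f t| ≥ |q.1 - q.2| ^ (γ + 1)}

section exceptionalSet

variable {f : ℝ → ℝ} {q : ℝ × ℝ}

lemma ofReal_rpow_le_setLIntegral_uIcc_of_mem_exceptionalSet (hq : q ∈ exceptionalSet f γ) :
    ENNReal.ofReal (|q.1 - q.2| ^ (γ + 1)) ≤ ∫⁻ t in uIcc q.1 q.2, ‖f t‖ₑ :=
  calc ENNReal.ofReal (|q.1 - q.2| ^ (γ + 1))
      ≤ ‖∫ t in uIoc q.2 q.1, f t‖ₑ := by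
        rw [Real.enorm_eq_ofReal_abs, ← intervalIntegral.abs_integral_eq_abs_integral_uIoc]
        exact ENNReal.ofReal_le_ofReal hq.2
    _ ≤ ∫⁻ t in uIoc q.2 q.1, ‖f t‖ₑ := enorm_integral_le_lintegral_enorm _
    _ ≤ ∫⁻ t in uIcc q.1 q.2, ‖f t‖ₑ :=
        lintegral_mono_set (uIoc_subset_uIcc.trans (uIcc_comm _ _).le)

lemma abs_sub_le_of_mem_exceptionalSet (hγ : 0 < γ) (hf : ∫⁻ t, ‖f t‖ₑ ≠ ∞)
    (hq : q ∈ exceptionalSet f γ) : |q.1 - q.2| ≤ (∫⁻ t, ‖f t‖ₑ).toReal ^ (γ + 1)⁻¹ := by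
  rw [Real.le_rpow_inv_iff_of_pos (abs_nonneg _) ENNReal.toReal_nonneg (by linarith),
    ← ENNReal.ofReal_le_iff_le_toReal hf]
  exact (ofReal_rpow_le_setLIntegral_uIcc_of_mem_exceptionalSet hq).trans
    (setLIntegral_le_lintegral _ _)

end exceptionalSet

theorem setLIntegral_exceptionalSet_le (f : ℝ → ℝ) (hγ : 0 < γ) :
    ∫⁻ q in exceptionalSet f γ, ENNReal.ofReal (|q.1 - q.2| ^ (γ - 1))
      ≤ ENNReal.ofReal (2 * 5 ^ (γ + 1) / γ) * ∫⁻ t, ‖f t‖ₑ := by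
  set K := ENNReal.ofReal (2 * 5 ^ (γ + 1) / γ)
  set E := exceptionalSet f γ
  rcases eq_or_ne (∫⁻ t, ‖f t‖ₑ) ∞ with hf | hf
  · rw [hf, ENNReal.mul_top (by positivity)]
    exact le_top
  obtain ⟨u, huE, hu, hdisj, hcover⟩ := exists_disjoint_subfamily_covering_enlargement_uIcc E
    (fun q hq => hq.1) (fun q hq => abs_sub_le_of_mem_exceptionalSet hγ hf hq)
  have := hu.to_subtype
  set J : ℝ × ℝ → Set ℝ := fun b => closedBall ((b.1 + b.2) / 2) (5 * (|b.1 - b.2| / 2))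
  have hEJ : E ⊆ ⋃ b : u, J b ×ˢ J b := fun q hq => by
    obtain ⟨b, hb, hqb⟩ := hcover q hq
    exact mem_iUnion.2 ⟨⟨b, hb⟩, hqb left_mem_uIcc, hqb right_mem_uIcc⟩
  have hJ : ∀ b ∈ E, ∫⁻ q in J b ×ˢ J b, ENNReal.ofReal (|q.1 - q.2| ^ (γ - 1))
      ≤ K * ∫⁻ t in uIcc b.1 b.2, ‖f t‖ₑ := fun b hb => by
    refine (setLIntegral_closedBall_prod_rpow_abs_sub_le hγ _ (by positivity)).trans ?_
    have hscale : 2 * (2 * (5 * (|b.1 - b.2| / 2))) ^ (γ + 1) / γ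
        = 2 * 5 ^ (γ + 1) / γ * |b.1 - b.2| ^ (γ + 1) := by
      rw [show 2 * (5 * (|b.1 - b.2| / 2)) = 5 * |b.1 - b.2| by ring,
        Real.mul_rpow (by norm_num) (abs_nonneg _)]
      ring
    rw [hscale, ENNReal.ofReal_mul (by positivity)]
    gcongr
    exact ofReal_rpow_le_setLIntegral_uIcc_of_mem_exceptionalSet hb
  calc ∫⁻ q in E, ENNReal.ofReal (|q.1 - q.2| ^ (γ - 1))
      ≤ ∑' b : u, ∫⁻ q in J b ×ˢ J b, ENNReal.ofReal (|q.1 - q.2| ^ (γ - 1)) :=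
        (lintegral_mono_set hEJ).trans (lintegral_iUnion_le _ _)
    _ ≤ ∑' b : u, K * ∫⁻ t in uIcc b.1.1 b.1.2, ‖f t‖ₑ :=
        ENNReal.tsum_le_tsum fun b => hJ b (huE b.2)
    _ = K * ∫⁻ t in ⋃ b ∈ u, uIcc b.1 b.2, ‖f t‖ₑ := by
        rw [ENNReal.tsum_mul_left, lintegral_biUnion hu (fun _ _ => measurableSet_uIcc) hdisj]
    _ ≤ K * ∫⁻ t, ‖f t‖ₑ := by
        gcongr
        exact Measure.restrict_le_self

/-- Proposition 2.1: for `γ > 0` and nonnegative `f ∈ C_c(ℝ)`,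
`∬_{E(f,γ)} |x-y|^{γ-1} dx dy ≤ C (5^γ/γ) ∫ f` with `C` universal. -/
theorem weighted_measure_bound_one_dim :
    ∃ C : ℝ, 0 < C ∧ ∀ γ : ℝ, 0 < γ → ∀ f : ℝ → ℝ, Continuous f → HasCompactSupport f →
      (∀ t, 0 ≤ f t) →
      ∫⁻ q in {q : ℝ × ℝ | q.1 ≠ q.2 ∧ |∫ t in q.2..q.1, f t| ≥ |q.1 - q.2| ^ (γ + 1)},
          ENNReal.ofReal (|q.1 - q.2| ^ (γ - 1))
        ≤ ENNReal.ofReal (C * (5 ^ γ / γ) * ∫ t, f t) := by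
  refine ⟨10, by norm_num, fun γ hγ f hf hsupp hf0 => ?_⟩
  have hmass : ∫⁻ t, ‖f t‖ₑ = ENNReal.ofReal (∫ t, f t) := by
    rw [ofReal_integral_eq_lintegral_ofReal (hf.integrable_of_hasCompactSupport hsupp)
      (.of_forall hf0)]
    exact lintegral_congr fun t => Real.enorm_eq_ofReal (hf0 t)
  calc _ ≤ ENNReal.ofReal (2 * 5 ^ (γ + 1) / γ) * ∫⁻ t, ‖f t‖ₑ :=
        setLIntegral_exceptionalSet_le f hγ
    _ = ENNReal.ofReal (10 * (5 ^ γ / γ) * ∫ t, f t) := by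
        rw [hmass, ← ENNReal.ofReal_mul (by positivity), Real.rpow_add_one (by norm_num)]
        ring_nf
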